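/- arXiv:2203.11037 — 3 statements merged into one kernel-verified Lean document; each statement's English description precedes it below -/
import Mathlib

section
/- Fix α>0 and u,v∈ℝ with u>−α, v∈(−α,α) and v<u. Then the process k ↦ z^stat_{u,v}(2+k,2)/z^stat_{u,v}(2,2), k∈ℤ≥0, has the same law as the process (z_{u,v}(k))_{k∈ℤ≥0}. -/
open MeasureTheory ProbabilityTheory Filter

noncomputable section

/-- Density of the inverse-gamma distribution with parameter `θ`. -/
def invGammaPdf (θ x : ℝ) : ℝ :=
  if 0 < x then (Real.Gamma θ)⁻¹ * x ^ (-θ - 1) * Real.exp (-1 / x) else 0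

/-- The inverse-gamma distribution with parameter `θ`, as a measure on `ℝ`. -/
def invGammaMeasure (θ : ℝ) : Measure ℝ :=
  MeasureTheory.volume.withDensity fun x => ENNReal.ofReal (invGammaPdf θ x)

/-- The octant index set `{(n,m) : 1 ≤ m ≤ n}`. -/
abbrev OctIdx : Type := {p : ℕ × ℕ // 1 ≤ p.2 ∧ p.2 ≤ p.1}

/-- Partition function of the half-space polymer with weights `w`: the sum over up-right
paths from `(1,1)` to `(n,m)` staying in the octant of the product of the weights along
the path (defined through the equivalent recursion, with value `0` off the octant). -/
def polymerZ (w : ℕ → ℕ → ℝ) (n m : ℕ) : ℝ :=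
  if _h1 : m = 0 ∨ n < m then 0
  else if _h2 : n = 1 then w 1 1
  else w n m * (polymerZ w (n - 1) m + polymerZ w n (m - 1))
termination_by n + m
decreasing_by all_goals omega

/-- The process `z_{u,v}` built from the multiplicative random walks `r1, r2` and
the random variable `winv` (interpreted as `ϖ⁻¹`):
`z_{u,v}(k) = r₂(k) + ϖ⁻¹ ∑_{ℓ=1}^k r₁(ℓ) r₂(k)/r₂(ℓ-1)`. -/
def zuvProc {Ω : Type*} (r1 r2 : ℕ → Ω → ℝ) (winv : Ω → ℝ) (k : ℕ) (ω : Ω) : ℝ :=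
  r2 k ω + winv ω * ∑ ℓ ∈ Finset.Icc 1 k, r1 ℓ ω * (r2 k ω / r2 (ℓ - 1) ω)

/-- The data of the `z_{u,v}` construction: `r1, r2` are multiplicative random walks
started from `1` with i.i.d. inverse-gamma increment ratios of parameters `α+v`, `α-v`,
all the increment ratios and `winv` being mutually independent, where `winv = ϖ⁻¹` for
`ϖ ~ Gamma⁻¹(u-v)` (with the convention `winv = 0` when `u = v`). -/
structure IsZuvEnv {Ω : Type*} [MeasurableSpace Ω] (P : Measure Ω) (α u v : ℝ)
    (r1 r2 : ℕ → Ω → ℝ) (winv : Ω → ℝ) : Prop where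
  meas_r1 : ∀ k, Measurable (r1 k)
  meas_r2 : ∀ k, Measurable (r2 k)
  meas_winv : Measurable winv
  r1_zero : r1 0 =ᵐ[P] fun _ => 1
  r2_zero : r2 0 =ᵐ[P] fun _ => 1
  indep : iIndepFun
    (Sum.elim (fun k ω => r1 (k + 1) ω / r1 k ω)
      (Sum.elim (fun k ω => r2 (k + 1) ω / r2 k ω) (fun _ : Unit => winv))) P
  law_r1 : ∀ k, Measure.map (fun ω => r1 (k + 1) ω / r1 k ω) P = invGammaMeasure (α + v)
  law_r2 : ∀ k, Measure.map (fun ω => r2 (k + 1) ω / r2 k ω) P = invGammaMeasure (α - v)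
  winv_eq_zero : u = v → winv = fun _ => 0
  law_winv : u ≠ v → Measure.map winv P = (invGammaMeasure (u - v)).map fun x => x⁻¹

/-!
Along the second row the partition function satisfies
`Z(k+3,2) = w(k+3,2) (Z(k+2,2) + Z(k+3,1))` with `Z(k+2,1) = ∏_{j<k} w(j+3,1)`, and dividing by
`Z(2,2) = w(2,2)` turns this into the recursion `z(k+1) = (r₂(k+1)/r₂(k)) (z(k) + ϖ⁻¹ r₁(k+1))`
of `z_{u,v}`. So both processes are the same measurable function `zuvOfIncrements` of their
increments: the weights `w(j+3,1)`, `w(j+3,2)`, `w(2,2)⁻¹` on one side, the ratios of `r₁`, `r₂`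
and `ϖ⁻¹` on the other. Both increment families are independent with the same marginals, hence
have the same (product) joint law.
-/

open Finset

section Telescoping

variable {G₀ : Type*} [CommGroupWithZero G₀] {f : ℕ → G₀}

lemma forall_ne_zero_of_div_ne_zero (h0 : f 0 ≠ 0) (h : ∀ n, f (n + 1) / f n ≠ 0) :
    ∀ n, f n ≠ 0
  | 0 => h0
  | n + 1 => (div_ne_zero_iff.mp (h n)).1

lemma Finset.prod_range_div_of_forall_ne_zero (hf : ∀ n, f n ≠ 0) (n : ℕ) :
    ∏ i ∈ range n, f (i + 1) / f i = f n / f 0 := by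
  induction n with
  | zero => simp [div_self (hf 0)]
  | succ n ih => rw [prod_range_succ, ih, div_mul_div_cancel₀' (hf n)]

end Telescoping

section Zuv

variable {Ω : Type*} (r1 r2 : ℕ → Ω → ℝ) (winv : Ω → ℝ)

lemma zuvProc_zero (ω : Ω) (h : r2 0 ω = 1) : zuvProc r1 r2 winv 0 ω = 1 := by
  simp [zuvProc, h]

lemma zuvProc_succ (k : ℕ) (ω : Ω) (h : r2 k ω ≠ 0) :
    zuvProc r1 r2 winv (k + 1) ω
      = r2 (k + 1) ω / r2 k ω * (zuvProc r1 r2 winv k ω + winv ω * r1 (k + 1) ω) := by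
  have hsum : ∑ ℓ ∈ Icc 1 k, r1 ℓ ω * (r2 (k + 1) ω / r2 (ℓ - 1) ω)
      = r2 (k + 1) ω / r2 k ω * ∑ ℓ ∈ Icc 1 k, r1 ℓ ω * (r2 k ω / r2 (ℓ - 1) ω) := by
    rw [mul_sum]
    refine sum_congr rfl fun ℓ _ => ?_
    rw [← div_mul_div_cancel₀ h]
    ring
  rw [zuvProc, zuvProc, sum_Icc_succ_top (by omega), hsum, Nat.add_sub_cancel]
  field_simp
  ring

lemma measurable_zuvProc [MeasurableSpace Ω] (hr1 : ∀ k, Measurable (r1 k))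
    (hr2 : ∀ k, Measurable (r2 k)) (hw : Measurable winv) :
    Measurable fun ω k => zuvProc r1 r2 winv k ω := by
  refine measurable_pi_lambda _ fun k => ?_
  unfold zuvProc
  fun_prop

end Zuv

/-- `z_{u,v}` in the canonical model: the coordinates `x (inl j)`, `x (inr (inl j))` and
`x (inr (inr ()))` are the increments `r₁(j+1)/r₁(j)`, `r₂(j+1)/r₂(j)` and `ϖ⁻¹`. -/
def zuvOfIncrements (x : ℕ ⊕ ℕ ⊕ Unit → ℝ) (k : ℕ) : ℝ :=
  zuvProc (fun n x => ∏ j ∈ range n, x (.inl j)) (fun n x => ∏ j ∈ range n, x (.inr (.inl j)))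
    (fun x => x (.inr (.inr ()))) k x

def zuvIncrements {Ω : Type*} (r1 r2 : ℕ → Ω → ℝ) (winv : Ω → ℝ) :
    ℕ ⊕ ℕ ⊕ Unit → Ω → ℝ :=
  Sum.elim (fun k ω => r1 (k + 1) ω / r1 k ω)
    (Sum.elim (fun k ω => r2 (k + 1) ω / r2 k ω) (fun _ => winv))

lemma measurable_zuvOfIncrements : Measurable zuvOfIncrements :=
  measurable_zuvProc _ _ _ (fun _ => by fun_prop) (fun _ => by fun_prop) (measurable_pi_apply _)

lemma zuvOfIncrements_zero (x : ℕ ⊕ ℕ ⊕ Unit → ℝ) : zuvOfIncrements x 0 = 1 :=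
  zuvProc_zero _ _ _ _ (prod_range_zero _)

lemma zuvOfIncrements_succ (x : ℕ ⊕ ℕ ⊕ Unit → ℝ) (hx : ∀ j, x (.inr (.inl j)) ≠ 0) (k : ℕ) :
    zuvOfIncrements x (k + 1)
      = x (.inr (.inl k)) *
          (zuvOfIncrements x k + x (.inr (.inr ())) * ∏ j ∈ range (k + 1), x (.inl j)) := by
  have hk : ∏ j ∈ range k, x (.inr (.inl j)) ≠ 0 := prod_ne_zero_iff.mpr fun j _ => hx j
  rw [zuvOfIncrements, zuvProc_succ _ _ _ _ _ hk, prod_range_succ, mul_div_cancel_left₀ _ hk]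
  rfl

lemma zuvProc_eq_zuvOfIncrements {Ω : Type*} (r1 r2 : ℕ → Ω → ℝ) (winv : Ω → ℝ) (ω : Ω)
    (h1 : r1 0 ω = 1) (h2 : r2 0 ω = 1)
    (hr1 : ∀ j, r1 (j + 1) ω / r1 j ω ≠ 0) (hr2 : ∀ j, r2 (j + 1) ω / r2 j ω ≠ 0) (k : ℕ) :
    zuvProc r1 r2 winv k ω = zuvOfIncrements (fun i => zuvIncrements r1 r2 winv i ω) k := by
  have walk {r : ℕ → Ω → ℝ} (h0 : r 0 ω = 1) (hr : ∀ j, r (j + 1) ω / r j ω ≠ 0) (n : ℕ) :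
      ∏ j ∈ range n, r (j + 1) ω / r j ω = r n ω := by
    rw [prod_range_div_of_forall_ne_zero
      (forall_ne_zero_of_div_ne_zero (f := (r · ω)) (h0 ▸ one_ne_zero) hr), h0, div_one]
  simp only [zuvOfIncrements, zuvProc, zuvIncrements, Sum.elim_inl, Sum.elim_inr,
    walk h1 hr1, walk h2 hr2]

section Polymer

variable (w : ℕ → ℕ → ℝ)

lemma polymerZ_zero_right (n : ℕ) : polymerZ w n 0 = 0 := by
  rw [polymerZ]; simp

lemma polymerZ_of_lt {n m : ℕ} (h : n < m) : polymerZ w n m = 0 := by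
  rw [polymerZ, dif_pos (.inr h)]

lemma polymerZ_one_one : polymerZ w 1 1 = w 1 1 := by
  rw [polymerZ]; simp

lemma polymerZ_succ_succ {n m : ℕ} (hn : 1 ≤ n) (hm : m ≤ n) :
    polymerZ w (n + 1) (m + 1)
      = w (n + 1) (m + 1) * (polymerZ w n (m + 1) + polymerZ w (n + 1) m) := by
  rw [polymerZ, dif_neg (by omega), dif_neg (by omega)]
  rfl

lemma polymerZ_first_row (n : ℕ) : polymerZ w (n + 1) 1 = ∏ i ∈ range (n + 1), w (i + 1) 1 := by
  induction n with
  | zero => simp [polymerZ_one_one]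
  | succ n ih =>
    rw [polymerZ_succ_succ w (m := 0) (by omega) (by omega), ih, polymerZ_zero_right, add_zero,
      prod_range_succ _ (n + 1), mul_comm]

end Polymer

section TwoRow

variable (w : ℕ → ℕ → ℝ)

def twoRowIncrements : ℕ ⊕ ℕ ⊕ Unit → ℝ :=
  Sum.elim (fun j => w (j + 3) 1) (Sum.elim (fun j => w (j + 3) 2) fun _ => (w 2 2)⁻¹)

variable {w} (h11 : w 1 1 = 1) (h21 : w 2 1 = 1)
include h11 h21

lemma polymerZ_first_row_of_eq_one (k : ℕ) :
    polymerZ w (k + 2) 1 = ∏ j ∈ range k, w (j + 3) 1 := by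
  rw [polymerZ_first_row w (k + 1), prod_range_succ', prod_range_succ']
  simp [h11, h21]

lemma polymerZ_two_two_of_eq_one : polymerZ w 2 2 = w 2 2 := by
  rw [polymerZ_succ_succ w (n := 1) (m := 1) le_rfl le_rfl]
  simp [polymerZ_of_lt, polymerZ_first_row_of_eq_one h11 h21 0]

lemma polymerZ_second_row_ratio (h22 : w 2 2 ≠ 0) (h2 : ∀ j, w (j + 3) 2 ≠ 0) (k : ℕ) :
    polymerZ w (2 + k) 2 / polymerZ w 2 2 = zuvOfIncrements (twoRowIncrements w) k := by
  have hZ (k : ℕ) : polymerZ w (k + 2) 2 = w 2 2 * zuvOfIncrements (twoRowIncrements w) k := by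
    induction k with
    | zero => rw [zuvOfIncrements_zero, mul_one, polymerZ_two_two_of_eq_one h11 h21]
    | succ k ih =>
      rw [show k + 1 + 2 = k + 2 + 1 by rfl, polymerZ_succ_succ w (m := 1) (by omega) (by omega),
        ih, show k + 2 + 1 = k + 1 + 2 by rfl, polymerZ_first_row_of_eq_one h11 h21,
        zuvOfIncrements_succ _ h2]
      simp only [twoRowIncrements, Sum.elim_inl, Sum.elim_inr]
      field_simp
  rw [add_comm, hZ, polymerZ_two_two_of_eq_one h11 h21, mul_div_cancel_left₀ _ h22]

end TwoRow

lemma ae_pos_invGammaMeasure (θ : ℝ) : ∀ᵐ x ∂invGammaMeasure θ, 0 < x := by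
  rw [ae_iff]
  simp only [not_lt]
  change invGammaMeasure θ (Set.Iic 0) = 0
  rw [invGammaMeasure, withDensity_apply _ measurableSet_Iic]
  refine (setLIntegral_congr_fun measurableSet_Iic fun x hx => ?_).trans lintegral_zero
  simp [invGammaPdf, not_lt.2 (Set.mem_Iic.1 hx)]

lemma ae_pos_of_map_eq_invGammaMeasure {Ω : Type*} [MeasurableSpace Ω] {P : Measure Ω}
    {f : Ω → ℝ} (hf : Measurable f) {θ : ℝ} (h : P.map f = invGammaMeasure θ) :
    ∀ᵐ ω ∂P, 0 < f ω :=
  ae_of_ae_map hf.aemeasurable (h ▸ ae_pos_invGammaMeasure θ)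

lemma map_comp_eq_of_iIndepFun {ι Ω Ω' 𝓧 β : Type*} [MeasurableSpace Ω] [MeasurableSpace Ω']
    [MeasurableSpace 𝓧] [MeasurableSpace β] {P : Measure Ω} {P' : Measure Ω'}
    [IsProbabilityMeasure P] [IsProbabilityMeasure P'] {X : ι → Ω → 𝓧} {Y : ι → Ω' → 𝓧}
    (hX : ∀ i, Measurable (X i)) (hY : ∀ i, Measurable (Y i))
    (hXi : iIndepFun X P) (hYi : iIndepFun Y P') (hlaw : ∀ i, P.map (X i) = P'.map (Y i))
    {Φ : (ι → 𝓧) → β} (hΦ : Measurable Φ) :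
    P.map (fun ω => Φ fun i => X i ω) = P'.map (fun ω => Φ fun i => Y i ω) := by
  change P.map (Φ ∘ fun ω i => X i ω) = P'.map (Φ ∘ fun ω i => Y i ω)
  rw [← Measure.map_map hΦ (measurable_pi_lambda _ hX),
    ← Measure.map_map hΦ (measurable_pi_lambda _ hY),
    hXi.map_fun_eq_infinitePi_map hX, hYi.map_fun_eq_infinitePi_map hY, funext hlaw]

section TwoRowRandom

variable {Ω : Type*} [MeasurableSpace Ω] {P : Measure Ω} {W : ℕ → ℕ → Ω → ℝ}

def twoRowSite : ℕ ⊕ ℕ ⊕ Unit → OctIdx :=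
  Sum.elim (fun j => ⟨(j + 3, 1), by omega⟩)
    (Sum.elim (fun j => ⟨(j + 3, 2), by omega⟩) fun _ => ⟨(2, 2), by omega⟩)

lemma twoRowSite_injective : Function.Injective twoRowSite := by
  rintro (a | a | ⟨⟩) (b | b | ⟨⟩) h <;> simp_all [twoRowSite]

lemma iIndepFun_twoRowIncrements (hW : iIndepFun (fun p : OctIdx => W p.1.1 p.1.2) P) :
    iIndepFun (fun i ω => twoRowIncrements (fun a b => W a b ω) i) P := by
  have h := (hW.precomp twoRowSite_injective).comp
    (Sum.elim (fun _ => id) (Sum.elim (fun _ => id) fun _ => Inv.inv))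
    (by rintro (_ | _ | _) <;> simp only [Sum.elim_inl, Sum.elim_inr] <;> fun_prop)
  convert h using 1
  funext i
  rcases i with _ | _ | _ <;> rfl

lemma measurable_twoRowIncrements (hW : ∀ n m, Measurable (W n m)) (i : ℕ ⊕ ℕ ⊕ Unit) :
    Measurable fun ω => twoRowIncrements (fun a b => W a b ω) i := by
  rcases i with _ | _ | _
  exacts [hW _ _, hW _ _, (hW 2 2).inv]

lemma polymerZ_second_row_ratio_ae_eq (hWmeas : ∀ n m, Measurable (W n m))
    (hW11 : W 1 1 = fun _ => 1) (hW21 : W 2 1 = fun _ => 1) {θ₂₂ θ₂ : ℝ}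
    (hW22 : P.map (W 2 2) = invGammaMeasure θ₂₂)
    (hWrow2 : ∀ i, 3 ≤ i → P.map (W i 2) = invGammaMeasure θ₂) :
    (fun ω (k : ℕ) =>
        polymerZ (fun a b => W a b ω) (2 + k) 2 / polymerZ (fun a b => W a b ω) 2 2)
      =ᵐ[P] fun ω => zuvOfIncrements (twoRowIncrements fun a b => W a b ω) := by
  have hpos22 := ae_pos_of_map_eq_invGammaMeasure (hWmeas 2 2) hW22
  have hpos2 : ∀ᵐ ω ∂P, ∀ j, 0 < W (j + 3) 2 ω := ae_all_iff.2 fun j =>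
    ae_pos_of_map_eq_invGammaMeasure (hWmeas _ _) (hWrow2 (j + 3) (by omega))
  filter_upwards [hpos22, hpos2] with ω h22 h2
  funext k
  exact polymerZ_second_row_ratio (congrFun hW11 ω) (congrFun hW21 ω) h22.ne'
    (fun j => (h2 j).ne') k

end TwoRowRandom

namespace IsZuvEnv

variable {Ω : Type*} [MeasurableSpace Ω] {P : Measure Ω} {α u v : ℝ} {r1 r2 : ℕ → Ω → ℝ}
  {winv : Ω → ℝ}

lemma measurable_zuvIncrements (henv : IsZuvEnv P α u v r1 r2 winv) (i : ℕ ⊕ ℕ ⊕ Unit) :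
    Measurable (zuvIncrements r1 r2 winv i) := by
  rcases i with k | k | _
  exacts [(henv.meas_r1 _).div (henv.meas_r1 _), (henv.meas_r2 _).div (henv.meas_r2 _),
    henv.meas_winv]

lemma zuvProc_ae_eq (henv : IsZuvEnv P α u v r1 r2 winv) :
    (fun ω (k : ℕ) => zuvProc r1 r2 winv k ω)
      =ᵐ[P] fun ω => zuvOfIncrements fun i => zuvIncrements r1 r2 winv i ω := by
  have hpos1 : ∀ᵐ ω ∂P, ∀ k, 0 < r1 (k + 1) ω / r1 k ω := ae_all_iff.2 fun k =>
    ae_pos_of_map_eq_invGammaMeasure (henv.measurable_zuvIncrements (.inl k)) (henv.law_r1 k)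
  have hpos2 : ∀ᵐ ω ∂P, ∀ k, 0 < r2 (k + 1) ω / r2 k ω := ae_all_iff.2 fun k =>
    ae_pos_of_map_eq_invGammaMeasure (henv.measurable_zuvIncrements (.inr (.inl k)))
      (henv.law_r2 k)
  filter_upwards [hpos1, hpos2, henv.r1_zero, henv.r2_zero] with ω h1 h2 h10 h20
  funext k
  exact zuvProc_eq_zuvOfIncrements r1 r2 winv ω h10 h20 (fun j => (h1 j).ne')
    (fun j => (h2 j).ne') k

end IsZuvEnv

theorem tworow_ratio_is_zuv_general
    (α u v : ℝ) (hvu : v < u)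
    {Ω : Type*} [MeasurableSpace Ω] (P : Measure Ω) [IsProbabilityMeasure P]
    (W : ℕ → ℕ → Ω → ℝ) (hWmeas : ∀ n m, Measurable (W n m))
    (hW11 : W 1 1 = fun _ => 1) (hW21 : W 2 1 = fun _ => 1)
    (hWindep : iIndepFun (fun p : OctIdx => W p.1.1 p.1.2) P)
    (hW22 : Measure.map (W 2 2) P = invGammaMeasure (u - v))
    (hWrow1 : ∀ i, 3 ≤ i → Measure.map (W i 1) P = invGammaMeasure (α + v))
    (hWrow2 : ∀ i, 3 ≤ i → Measure.map (W i 2) P = invGammaMeasure (α - v))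
    {Ω' : Type*} [MeasurableSpace Ω'] (P' : Measure Ω') [IsProbabilityMeasure P']
    (r1 r2 : ℕ → Ω' → ℝ) (winv : Ω' → ℝ)
    (henv : IsZuvEnv P' α u v r1 r2 winv) :
    Measure.map (fun ω (k : ℕ) =>
        polymerZ (fun a b => W a b ω) (2 + k) 2 / polymerZ (fun a b => W a b ω) 2 2) P
      = Measure.map (fun ω (k : ℕ) => zuvProc r1 r2 winv k ω) P' := by
  rw [Measure.map_congr (polymerZ_second_row_ratio_ae_eq hWmeas hW11 hW21 hW22 hWrow2),
    Measure.map_congr henv.zuvProc_ae_eq]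
  refine map_comp_eq_of_iIndepFun (measurable_twoRowIncrements hWmeas)
    henv.measurable_zuvIncrements (iIndepFun_twoRowIncrements hWindep) henv.indep ?_
    measurable_zuvOfIncrements
  rintro (k | k | _)
  · exact (hWrow1 (k + 3) (by omega)).trans (henv.law_r1 k).symm
  · exact (hWrow2 (k + 3) (by omega)).trans (henv.law_r2 k).symm
  · change P.map (Inv.inv ∘ W 2 2) = P'.map winv
    rw [← Measure.map_map measurable_inv (hWmeas 2 2), hW22, henv.law_winv hvu.ne']

/-- **Identification of the two-row stationary ratios with `z_{u,v}`.**
The process `k ↦ z^stat_{u,v}(2+k,2)/z^stat_{u,v}(2,2)` has the same law as the process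
`z_{u,v}`. Here `W` denotes the two-row stationary weights (parameters `α∘ = u, α₁ = v,
α₂ = -v, αᵢ = α` for `i ≥ 3`, with the weights at `(1,1)` and `(2,1)` set to `1`). -/
theorem tworow_ratio_is_zuv
    (α u v : ℝ) (hα : 0 < α) (hu : -α < u) (hv : -α < v) (hv' : v < α) (hvu : v < u)
    {Ω : Type*} [MeasurableSpace Ω] (P : Measure Ω) [IsProbabilityMeasure P]
    (W : ℕ → ℕ → Ω → ℝ) (hWmeas : ∀ n m, Measurable (W n m))
    (hW11 : W 1 1 = fun _ => 1) (hW21 : W 2 1 = fun _ => 1)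
    (hWindep : iIndepFun (fun p : OctIdx => W p.1.1 p.1.2) P)
    (hW22 : Measure.map (W 2 2) P = invGammaMeasure (u - v))
    (hWrow1 : ∀ i, 3 ≤ i → Measure.map (W i 1) P = invGammaMeasure (α + v))
    (hWrow2 : ∀ i, 3 ≤ i → Measure.map (W i 2) P = invGammaMeasure (α - v))
    (hWdiag : ∀ i, 3 ≤ i → Measure.map (W i i) P = invGammaMeasure (u + α))
    (hWbulk : ∀ i j, 3 ≤ j → j < i → Measure.map (W i j) P = invGammaMeasure (2 * α))
    {Ω' : Type*} [MeasurableSpace Ω'] (P' : Measure Ω') [IsProbabilityMeasure P']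
    (r1 r2 : ℕ → Ω' → ℝ) (winv : Ω' → ℝ)
    (henv : IsZuvEnv P' α u v r1 r2 winv) :
    Measure.map (fun ω (k : ℕ) =>
        polymerZ (fun a b => W a b ω) (2 + k) 2 / polymerZ (fun a b => W a b ω) 2 2) P
      = Measure.map (fun ω (k : ℕ) => zuvProc r1 r2 winv k ω) P' :=
  tworow_ratio_is_zuv_general α u v hvu P W hWmeas hW11 hW21 hWindep hW22 hWrow1 hWrow2 P' r1 r2
    winv henv

end
end

section
/- Fix a>0. For ε>0, let X_ε be a Gamma^{-1}(εa) random variable. Then the law of ε·log X_ε converges weakly, as ε→0+, to the exponential distribution with rate a (the probability measure on ℝ with density a e^{−ax} on (0,∞) and zero elsewhere). -/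
open MeasureTheory ProbabilityTheory Filter

noncomputable section

/-- The exponential distribution with rate `a`: density `a e^{-a x}` on `(0,∞)`. -/
def expoMeasure (a : ℝ) : Measure ℝ :=
  MeasureTheory.volume.withDensity fun x =>
    ENNReal.ofReal (if 0 < x then a * Real.exp (-(a * x)) else 0)

/-- `e^{-a|y|}` is integrable on `ℝ`. -/
lemma integrable_exp_neg_abs_aux {a : ℝ} (ha : 0 < a) :
    Integrable (fun y : ℝ => Real.exp (-(a * |y|))) := by
  have h1 : IntegrableOn (fun y : ℝ => Real.exp (-(a * |y|))) (Set.Ici 0) := by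
    rw [integrableOn_Ici_iff_integrableOn_Ioi]
    refine (exp_neg_integrableOn_Ioi 0 ha).congr_fun ?_ measurableSet_Ioi
    intro y hy
    simp only []
    rw [abs_of_pos hy]
    ring_nf
  have h2 : IntegrableOn (fun y : ℝ => Real.exp (-(a * |y|))) (Set.Iic 0) := by
    have h3 := (MeasurePreserving.integrableOn_comp_preimage
      (Measure.measurePreserving_neg (volume : Measure ℝ))
      (Homeomorph.neg ℝ).measurableEmbedding).2 h1
    have heq : ((fun y : ℝ => Real.exp (-(a * |y|))) ∘ Neg.neg) =
        fun y : ℝ => Real.exp (-(a * |y|)) := funext fun y => by simp [abs_neg]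
    have hset : (Neg.neg ⁻¹' Set.Ici (0:ℝ)) = Set.Iic 0 := by
      ext y; simp
    rwa [heq, hset] at h3
  have h4 := h2.union h1
  rwa [Set.Iic_union_Ici, integrableOn_univ] at h4

/-- `exp (-t) ≤ t⁻¹` for `t > 0`. -/
lemma exp_neg_le_inv_aux {t : ℝ} (ht : 0 < t) : Real.exp (-t) ≤ t⁻¹ := by
  rw [Real.exp_neg]
  exact inv_anti₀ ht (by linarith [Real.add_one_le_exp t])

/-- **Inverse-gamma to exponential limit.** If `X_ε ~ Gamma⁻¹(ε a)`, then the law of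
`ε log X_ε` converges weakly, as `ε → 0⁺`, to the exponential distribution with
rate `a` (i.e. integrals of bounded continuous functions converge). -/
theorem invGamma_log_tendsto_exponential (a : ℝ) (ha : 0 < a) :
    ∀ f : BoundedContinuousFunction ℝ ℝ,
      Filter.Tendsto
        (fun ε : ℝ =>
          ∫ y, f y ∂((invGammaMeasure (ε * a)).map fun x => ε * Real.log x))
        (nhdsWithin 0 (Set.Ioi 0))
        (nhds (∫ y, f y ∂(expoMeasure a))) := by
  intro f
  set l : Filter ℝ := nhdsWithin 0 (Set.Ioi 0) with hl
  set φ : ℝ → ℝ → ℝ := fun ε y => Real.exp (-(a * y)) * Real.exp (-Real.exp (-(y / ε))) with hφ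
  set ψ : ℝ → ℝ := fun y => if 0 < y then Real.exp (-(a * y)) else 0 with hψ
  have hφd : ∀ ε y, φ ε y = Real.exp (-(a * y)) * Real.exp (-Real.exp (-(y / ε))) :=
    fun _ _ => rfl
  have hψd : ∀ y, ψ y = if 0 < y then Real.exp (-(a * y)) else 0 := fun _ => rfl
  -- Step B : the target integral
  have hB : ∫ y, f y ∂(expoMeasure a) = a * ∫ y, f y * ψ y := by
    have hmeas : Measurable fun y : ℝ =>
        ((if 0 < y then a * Real.exp (-(a * y)) else 0).toNNReal) := by
      apply Measurable.real_toNNReal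
      have h : (fun y : ℝ => if 0 < y then a * Real.exp (-(a * y)) else 0)
          = Set.indicator (Set.Ioi 0) (fun y => a * Real.exp (-(a * y))) := by
        funext y; simp [Set.indicator_apply, Set.mem_Ioi]
      rw [h]
      exact (continuous_const.mul (Real.continuous_exp.comp
        (continuous_const.mul continuous_id).neg)).measurable.indicator measurableSet_Ioi
    rw [expoMeasure]
    have hd : (fun x : ℝ => ENNReal.ofReal (if 0 < x then a * Real.exp (-(a * x)) else 0))
        = fun x : ℝ => (((if 0 < x then a * Real.exp (-(a * x)) else 0).toNNReal : NNReal)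
          : ENNReal) := rfl
    rw [hd, integral_withDensity_eq_integral_smul hmeas]
    rw [← MeasureTheory.integral_const_mul]
    congr 1; funext y
    rcases lt_or_ge 0 y with hy | hy
    · rw [hψd y, if_pos hy, NNReal.smul_def, smul_eq_mul, if_pos hy,
        Real.coe_toNNReal _ (by positivity)]
      ring
    · rw [hψd y, if_neg (not_lt.2 hy), NNReal.smul_def, smul_eq_mul, if_neg (not_lt.2 hy),
        Real.coe_toNNReal _ (by norm_num)]
      ring
  -- Step A : the integral for fixed ε > 0
  have hA : ∀ ε : ℝ, 0 < ε →
      (∫ y, f y ∂((invGammaMeasure (ε * a)).map fun x => ε * Real.log x))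
        = (a / Real.Gamma (ε * a + 1)) * ∫ y, f y * φ ε y := by
    intro ε hε
    have hθ : 0 < ε * a := mul_pos hε ha
    have hΓ : 0 < Real.Gamma (ε * a) := Real.Gamma_pos_of_pos hθ
    have hpdf_eq : invGammaPdf (ε * a) = Set.indicator (Set.Ioi 0)
        (fun x => (Real.Gamma (ε * a))⁻¹ * x ^ (-(ε * a) - 1) * Real.exp (-1 / x)) := by
      funext x; simp [invGammaPdf, Set.indicator_apply, Set.mem_Ioi]
    have hpdf_meas : Measurable (invGammaPdf (ε * a)) := by
      rw [hpdf_eq]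
      exact (((measurable_id.pow_const _).const_mul _).mul
        (Real.measurable_exp.comp (measurable_const.div measurable_id))).indicator
        measurableSet_Ioi
    have hpdf_nonneg : ∀ x, 0 ≤ invGammaPdf (ε * a) x := by
      intro x
      rw [invGammaPdf]
      split
      · rename_i hx; positivity
      · exact le_refl 0
    rw [MeasureTheory.integral_map ((Real.measurable_log.const_mul ε).aemeasurable)
      f.continuous.aestronglyMeasurable]
    rw [invGammaMeasure]
    have hd : (fun x => ENNReal.ofReal (invGammaPdf (ε * a) x))
        = fun x => (((invGammaPdf (ε * a) x).toNNReal : NNReal) : ENNReal) := rfl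
    rw [hd, integral_withDensity_eq_integral_smul hpdf_meas.real_toNNReal]
    have hsmul : (fun x => ((invGammaPdf (ε * a) x).toNNReal) • f (ε * Real.log x))
        = Set.indicator (Set.Ioi 0)
          (fun x => (Real.Gamma (ε * a))⁻¹ * x ^ (-(ε * a) - 1) * Real.exp (-1 / x)
            * f (ε * Real.log x)) := by
      funext x
      rw [NNReal.smul_def, smul_eq_mul, Real.coe_toNNReal _ (hpdf_nonneg x), hpdf_eq]
      rcases lt_or_ge 0 x with hx | hx
      · simp [Set.indicator_apply, Set.mem_Ioi, hx]
      · simp [Set.indicator_apply, Set.mem_Ioi, not_lt.2 hx]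
    rw [hsmul, integral_indicator measurableSet_Ioi]
    -- change of variables x = exp (y/ε)
    have himg : Set.Ioi (0:ℝ) = (fun y : ℝ => Real.exp (y / ε)) '' Set.univ := by
      rw [Set.image_univ]
      ext x; simp only [Set.mem_range, Set.mem_Ioi]
      constructor
      · intro hx
        refine ⟨ε * Real.log x, ?_⟩
        rw [mul_comm, mul_div_assoc, div_self hε.ne', mul_one, Real.exp_log hx]
      · rintro ⟨y, rfl⟩; exact Real.exp_pos _
    have hder : ∀ y ∈ Set.univ, HasDerivWithinAt (fun y : ℝ => Real.exp (y / ε))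
        (Real.exp (y / ε) * (1 / ε)) Set.univ y := by
      intro y _
      have h0 : HasDerivAt (fun z : ℝ => z / ε) (1 / ε) y := (hasDerivAt_id y).div_const ε
      exact h0.exp.hasDerivWithinAt
    have hinj : Set.InjOn (fun y : ℝ => Real.exp (y / ε)) Set.univ := by
      intro x _ y _ h
      have h2 := Real.exp_injective h
      field_simp at h2
      exact h2
    rw [himg, integral_image_eq_integral_abs_deriv_smul MeasurableSet.univ hder hinj _]
    rw [MeasureTheory.Measure.restrict_univ]
    have hkey : ∀ y : ℝ, |Real.exp (y / ε) * (1 / ε)| •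
        ((Real.Gamma (ε * a))⁻¹ * Real.exp (y / ε) ^ (-(ε * a) - 1)
          * Real.exp (-1 / Real.exp (y / ε)) * f (ε * Real.log (Real.exp (y / ε))))
        = (a / Real.Gamma (ε * a + 1)) * (f y * φ ε y) := by
      intro y
      have h1 : Real.exp (y / ε) ^ (-(ε * a) - 1) = Real.exp (y / ε * (-(ε * a) - 1)) := by
        rw [Real.rpow_def_of_pos (Real.exp_pos _), Real.log_exp]
      have h2 : ε * Real.log (Real.exp (y / ε)) = y := by
        rw [Real.log_exp]
        field_simp
      have h3 : (-1 : ℝ) / Real.exp (y / ε) = -Real.exp (-(y / ε)) := by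
        rw [Real.exp_neg, div_eq_mul_inv, neg_one_mul]
      have h4 : Real.exp (y / ε) * Real.exp (y / ε * (-(ε * a) - 1)) = Real.exp (-(a * y)) := by
        rw [← Real.exp_add]
        congr 1
        field_simp
        ring
      have h5 : a / Real.Gamma (ε * a + 1) = (Real.Gamma (ε * a))⁻¹ * ε⁻¹ := by
        rw [Real.Gamma_add_one hθ.ne']
        field_simp
      rw [smul_eq_mul, abs_of_pos (by positivity), h1, h2, h3, h5, hφd, ← h4]
      ring
    simp only [hkey]
    rw [MeasureTheory.integral_const_mul]
  -- Step C : the constant tends to a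
  have hC : Tendsto (fun ε : ℝ => a / Real.Gamma (ε * a + 1)) l (nhds a) := by
    have hΓcont : ContinuousAt Real.Gamma 1 := by
      refine (Real.differentiableAt_Gamma ?_).continuousAt
      intro m h
      have h0 : (0:ℝ) ≤ (m : ℝ) := Nat.cast_nonneg m
      linarith
    have hinner : Tendsto (fun ε : ℝ => ε * a + 1) l (nhds 1) := by
      have h : Tendsto (fun ε : ℝ => ε * a + 1) (nhds 0) (nhds (0 * a + 1)) :=
        ((continuous_id.mul continuous_const).add continuous_const).tendsto 0
      rw [zero_mul, zero_add] at h
      exact h.mono_left nhdsWithin_le_nhds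
    have hΓ : Tendsto (fun ε : ℝ => Real.Gamma (ε * a + 1)) l (nhds 1) := by
      have h := hΓcont.tendsto.comp hinner
      rwa [Real.Gamma_one] at h
    have h := (tendsto_const_nhds (x := a) (f := l)).div hΓ one_ne_zero
    rw [div_one] at h
    exact h
  -- Step D : dominated convergence
  have hD : Tendsto (fun ε : ℝ => ∫ y, f y * φ ε y) l (nhds (∫ y, f y * ψ y)) := by
    apply MeasureTheory.tendsto_integral_filter_of_dominated_convergence
      (fun y => ‖f‖ * Real.exp (-(a * |y|)))
    · refine Filter.Eventually.of_forall fun ε => ?_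
      apply Continuous.aestronglyMeasurable
      refine f.continuous.mul ?_
      refine ((Real.continuous_exp.comp (continuous_const.mul continuous_id).neg).mul
        (Real.continuous_exp.comp (Real.continuous_exp.comp
          (continuous_id.div_const ε).neg).neg))
    · have hmem : Set.Ioc (0:ℝ) (2 * a)⁻¹ ∈ l := by
        apply Ioc_mem_nhdsGT_of_mem
        exact ⟨le_refl 0, by positivity⟩
      filter_upwards [hmem] with ε hε
      refine Filter.Eventually.of_forall fun y => ?_
      obtain ⟨hε0, hε1⟩ := hε
      have hφpos : 0 < φ ε y := by
        rw [hφd]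
        positivity
      have hbound : φ ε y ≤ Real.exp (-(a * |y|)) := by
        rcases le_or_gt 0 y with hy | hy
        · rw [abs_of_nonneg hy, hφd]
          have h1 : Real.exp (-Real.exp (-(y / ε))) ≤ 1 :=
            Real.exp_le_one_iff.mpr (neg_nonpos.mpr (Real.exp_pos _).le)
          calc Real.exp (-(a * y)) * Real.exp (-Real.exp (-(y / ε)))
              ≤ Real.exp (-(a * y)) * 1 :=
                mul_le_mul_of_nonneg_left h1 (Real.exp_pos _).le
            _ = Real.exp (-(a * y)) := mul_one _
        · rw [abs_of_neg hy, hφd]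
          have hgoal : -(a * -y) = a * y := by ring
          rw [hgoal]
          have h1 : Real.exp (-Real.exp (-(y / ε))) ≤ Real.exp (y / ε) := by
            have h := exp_neg_le_inv_aux (Real.exp_pos (-(y / ε)))
            rwa [← Real.exp_neg, neg_neg] at h
          have h2 : y / ε ≤ 2 * a * y := by
            have h2a : 2 * a ≤ ε⁻¹ := by
              have h := inv_anti₀ hε0 hε1
              rwa [inv_inv] at h
            rw [div_eq_mul_inv, mul_comm (2 * a) y]
            exact mul_le_mul_of_nonpos_left h2a hy.le
          calc Real.exp (-(a * y)) * Real.exp (-Real.exp (-(y / ε)))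
              ≤ Real.exp (-(a * y)) * Real.exp (y / ε) :=
                mul_le_mul_of_nonneg_left h1 (Real.exp_pos _).le
            _ ≤ Real.exp (-(a * y)) * Real.exp (2 * a * y) :=
                mul_le_mul_of_nonneg_left (Real.exp_le_exp.mpr h2) (Real.exp_pos _).le
            _ = Real.exp (a * y) := by rw [← Real.exp_add]; congr 1; ring
      calc ‖f y * φ ε y‖ = ‖f y‖ * |φ ε y| := by rw [norm_mul, Real.norm_eq_abs, Real.norm_eq_abs]
        _ ≤ ‖f‖ * Real.exp (-(a * |y|)) := by
            apply mul_le_mul (f.norm_coe_le_norm y) _ (abs_nonneg _) (norm_nonneg f)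
            rw [abs_of_pos hφpos]
            exact hbound
    · exact (integrable_exp_neg_abs_aux ha).const_mul _
    · have hae : ∀ᵐ y : ℝ, y ≠ 0 := by
        rw [MeasureTheory.ae_iff]
        simp only [not_ne_iff]
        have h : {y : ℝ | y = 0} = {0} := by ext y; simp
        rw [h]
        exact measure_singleton 0
      filter_upwards [hae] with y hy
      rcases hy.lt_or_gt with hy | hy
      · -- y < 0 : limit is 0
        have hψy : ψ y = 0 := if_neg (not_lt.2 hy.le)
        have hinner : Tendsto (fun ε : ℝ => -(y / ε)) l atTop := by
          have h : Tendsto (fun ε : ℝ => -y * ε⁻¹) l atTop :=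
            tendsto_inv_nhdsGT_zero.const_mul_atTop (by linarith)
          refine h.congr fun ε => ?_
          rw [div_eq_mul_inv, neg_mul]
        have hexp : Tendsto (fun ε : ℝ => Real.exp (-Real.exp (-(y / ε)))) l (nhds 0) := by
          apply Real.tendsto_exp_atBot.comp
          exact (tendsto_neg_atTop_atBot).comp (Real.tendsto_exp_atTop.comp hinner)
        have h : Tendsto (fun ε : ℝ => f y * φ ε y) l
            (nhds (f y * (Real.exp (-(a * y)) * 0))) := by
          apply Tendsto.const_mul
          exact (tendsto_const_nhds).mul hexp
        simpa [hψy] using h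
      · -- 0 < y : limit is exp(-(a y))
        have hψy : ψ y = Real.exp (-(a * y)) := if_pos hy
        have hinner : Tendsto (fun ε : ℝ => -(y / ε)) l atBot := by
          have h1 : Tendsto (fun ε : ℝ => y * ε⁻¹) l atTop :=
            tendsto_inv_nhdsGT_zero.const_mul_atTop hy
          have h2 := tendsto_neg_atTop_atBot.comp h1
          refine h2.congr fun ε => ?_
          simp [div_eq_mul_inv]
        have hexp0 : Tendsto (fun ε : ℝ => Real.exp (-(y / ε))) l (nhds 0) :=
          Real.tendsto_exp_atBot.comp hinner
        have hexp : Tendsto (fun ε : ℝ => Real.exp (-Real.exp (-(y / ε)))) l (nhds 1) := by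
          have hcont : Tendsto (fun t : ℝ => Real.exp (-t)) (nhds 0) (nhds (Real.exp (-0))) :=
            (Real.continuous_exp.comp continuous_neg).tendsto 0
          have h := hcont.comp hexp0
          rw [neg_zero, Real.exp_zero] at h
          exact h
        have h : Tendsto (fun ε : ℝ => f y * φ ε y) l
            (nhds (f y * (Real.exp (-(a * y)) * 1))) := by
          apply Tendsto.const_mul
          exact (tendsto_const_nhds).mul hexp
        simpa [hψy] using h
  -- conclude
  rw [hB]
  have h := hC.mul hD
  apply h.congr'
  filter_upwards [self_mem_nhdsWithin] with ε hε
  exact (hA ε hε).symm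

end
end

section
/- Fix θ>0 and let X be a Gamma^{-1}(θ) random variable. Then log X is integrable and square-integrable, with E[log X] = −ψ(θ) and Var(log X) = ψ'(θ), where ψ denotes the digamma function, i.e., ψ(θ) is the derivative at θ of t ↦ log Γ(t), and ψ'(θ) is its second derivative (the trigamma function). -/
open MeasureTheory ProbabilityTheory Filter

noncomputable section

/-- The digamma function `ψ`, as the derivative of `log Γ`. -/
def digamma (θ : ℝ) : ℝ := deriv (fun t => Real.log (Real.Gamma t)) θ

/-- The trigamma function `ψ'`, the second derivative of `log Γ`. -/
def trigamma (θ : ℝ) : ℝ := deriv (deriv fun t => Real.log (Real.Gamma t)) θ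


/-! The substitution `x = 1/y` turns the inverse-gamma density into the gamma density
`Γ(θ)⁻¹ y^(θ-1) e^(-y)`, so `E[(log X)^k] = (-1)^k Γ⁽ᵏ⁾(θ) / Γ(θ)`, where
`Γ⁽ᵏ⁾(θ) = ∫₀^∞ t^(θ-1) (log t)^k e^(-t) dt` is obtained by differentiating the Mellin transform
`Γ(s) = ∫₀^∞ t^(s-1) e^(-t) dt` under the integral sign. Hence `E[log X] = -Γ'(θ)/Γ(θ) = -ψ(θ)`
and `Var(log X) = Γ''(θ)/Γ(θ) - (Γ'(θ)/Γ(θ))^2 = (log Γ)''(θ) = ψ'(θ)`. -/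

open Set Asymptotics Real
open scoped Topology

def logPowExpNeg (k : ℕ) (t : ℝ) : ℂ := ((log t ^ k * exp (-t) : ℝ) : ℂ)

lemma logPowExpNeg_succ (k : ℕ) :
    logPowExpNeg (k + 1) = fun t => log t • logPowExpNeg k t := by
  ext t
  simp only [logPowExpNeg, Complex.real_smul, Complex.ofReal_mul, Complex.ofReal_pow, pow_succ]
  ring

lemma continuousOn_logPowExpNeg (k : ℕ) : ContinuousOn (logPowExpNeg k) (Ioi 0) := by
  unfold logPowExpNeg
  exact Complex.continuous_ofReal.comp_continuousOn
    (((continuousOn_log.mono fun _ ht => (ne_of_gt ht)).pow k).mul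
      (continuous_exp.comp continuous_neg).continuousOn)

lemma logPowExpNeg_isBigO_atTop (k : ℕ) (a : ℝ) : logPowExpNeg k =O[atTop] (· ^ (-a)) := by
  induction k generalizing a with
  | zero =>
    rw [← isBigO_norm_left]
    simp_rw [logPowExpNeg, pow_zero, one_mul, Complex.norm_real, isBigO_norm_left]
    simpa only [neg_one_mul] using (isLittleO_exp_neg_mul_rpow_atTop zero_lt_one (-a)).isBigO
  | succ k ih =>
    rw [logPowExpNeg_succ]
    exact isBigO_rpow_top_log_smul (lt_add_one a) (ih (a + 1))

lemma logPowExpNeg_isBigO_nhdsGT_zero (k : ℕ) {b : ℝ} (hb : 0 < b) :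
    logPowExpNeg k =O[𝓝[>] 0] (· ^ (-b)) := by
  induction k generalizing b with
  | zero =>
    refine IsBigO.of_bound 1 ?_
    filter_upwards [(tendsto_rpow_neg_nhdsGT_zero (neg_lt_zero.2 hb)).eventually_ge_atTop 1,
      self_mem_nhdsWithin] with t ht ht0
    have hexp : ‖logPowExpNeg 0 t‖ ≤ 1 := by
      rw [logPowExpNeg, pow_zero, one_mul, Complex.norm_real, norm_of_nonneg (exp_nonneg _)]
      exact exp_le_one_iff.2 (neg_nonpos.2 (le_of_lt ht0))
    rw [one_mul, norm_of_nonneg (rpow_nonneg (le_of_lt ht0) _)]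
    exact hexp.trans ht
  | succ k ih =>
    rw [logPowExpNeg_succ]
    exact isBigO_rpow_zero_log_smul (half_lt_self hb) (ih (half_pos hb))

lemma mellinConvergent_logPowExpNeg (k : ℕ) {s : ℂ} (hs : 0 < s.re) :
    MellinConvergent (logPowExpNeg k) s :=
  mellinConvergent_of_isBigO_rpow
    ((continuousOn_logPowExpNeg k).locallyIntegrableOn measurableSet_Ioi)
    (logPowExpNeg_isBigO_atTop k _) (lt_add_one s.re)
    (logPowExpNeg_isBigO_nhdsGT_zero k (half_pos hs)) (half_lt_self hs)

lemma hasDerivAt_mellin_logPowExpNeg (k : ℕ) {s : ℂ} (hs : 0 < s.re) :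
    HasDerivAt (mellin (logPowExpNeg k)) (mellin (logPowExpNeg (k + 1)) s) s := by
  rw [logPowExpNeg_succ]
  exact (mellin_hasDerivAt_of_isBigO_rpow
    ((continuousOn_logPowExpNeg k).locallyIntegrableOn measurableSet_Ioi)
    (logPowExpNeg_isBigO_atTop k _) (lt_add_one s.re)
    (logPowExpNeg_isBigO_nhdsGT_zero k (half_pos hs)) (half_lt_self hs)).2

/-- This is `Γ⁽ᵏ⁾(s)` for `s > 0` (`gammaLogMoment_zero`, `hasDerivAt_gammaLogMoment`). -/
def gammaLogMoment (k : ℕ) (s : ℝ) : ℝ := ∫ t in Ioi 0, t ^ (s - 1) * (log t ^ k * exp (-t))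

lemma cpow_smul_logPowExpNeg (k : ℕ) (s : ℝ) {t : ℝ} (ht : 0 < t) :
    (t : ℂ) ^ ((s : ℂ) - 1) • logPowExpNeg k t =
      ((t ^ (s - 1) * (log t ^ k * exp (-t)) : ℝ) : ℂ) := by
  simp only [logPowExpNeg, smul_eq_mul, Complex.ofReal_mul,
    Complex.ofReal_cpow (le_of_lt ht), Complex.ofReal_sub, Complex.ofReal_one]

lemma mellin_logPowExpNeg_ofReal (k : ℕ) (s : ℝ) :
    mellin (logPowExpNeg k) s = gammaLogMoment k s := by
  rw [mellin, gammaLogMoment, ← integral_complex_ofReal]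
  exact setIntegral_congr_fun measurableSet_Ioi fun t ht => cpow_smul_logPowExpNeg k s ht

lemma integrableOn_rpow_mul_log_pow_mul_exp_neg (k : ℕ) {s : ℝ} (hs : 0 < s) :
    IntegrableOn (fun t => t ^ (s - 1) * (log t ^ k * exp (-t))) (Ioi 0) := by
  refine (mellinConvergent_logPowExpNeg k (s := s) (by simpa using hs)).re.congr ?_
  filter_upwards [ae_restrict_mem measurableSet_Ioi] with t ht
  rw [cpow_smul_logPowExpNeg k s ht, RCLike.re_to_complex, Complex.ofReal_re]

lemma hasDerivAt_gammaLogMoment (k : ℕ) {s : ℝ} (hs : 0 < s) :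
    HasDerivAt (gammaLogMoment k) (gammaLogMoment (k + 1) s) s := by
  have hre : gammaLogMoment k = fun s : ℝ => (mellin (logPowExpNeg k) s).re := by
    ext u; simp [mellin_logPowExpNeg_ofReal]
  rw [hre, ← Complex.ofReal_re (gammaLogMoment (k + 1) s), ← mellin_logPowExpNeg_ofReal]
  exact (hasDerivAt_mellin_logPowExpNeg k (by simpa using hs)).real_of_complex

lemma gammaLogMoment_zero {s : ℝ} (hs : 0 < s) : gammaLogMoment 0 s = Gamma s := by
  rw [Gamma_eq_integral hs, gammaLogMoment]
  simp only [pow_zero, one_mul, mul_comm]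

lemma hasDerivAt_log_Gamma {s : ℝ} (hs : 0 < s) :
    HasDerivAt (fun t => log (Gamma t)) (gammaLogMoment 1 s / Gamma s) s := by
  have hΓ : gammaLogMoment 0 s ≠ 0 := gammaLogMoment_zero hs ▸ (Gamma_pos_of_pos hs).ne'
  have hlog := (hasDerivAt_gammaLogMoment 0 hs).log hΓ
  rw [gammaLogMoment_zero hs] at hlog
  refine hlog.congr_of_eventuallyEq ?_
  filter_upwards [isOpen_Ioi.mem_nhds hs] with t ht
  rw [gammaLogMoment_zero ht]

lemma digamma_eq_gammaLogMoment_div {s : ℝ} (hs : 0 < s) :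
    digamma s = gammaLogMoment 1 s / Gamma s :=
  (hasDerivAt_log_Gamma hs).deriv

lemma trigamma_eq_gammaLogMoment_div {s : ℝ} (hs : 0 < s) :
    trigamma s = gammaLogMoment 2 s / Gamma s - (gammaLogMoment 1 s / Gamma s) ^ 2 := by
  have hderiv : deriv (fun t => log (Gamma t)) =ᶠ[𝓝 s]
      fun t => gammaLogMoment 1 t / gammaLogMoment 0 t := by
    filter_upwards [isOpen_Ioi.mem_nhds hs] with t ht
    rw [(hasDerivAt_log_Gamma ht).deriv, gammaLogMoment_zero ht]
  have hΓ : gammaLogMoment 0 s ≠ 0 := gammaLogMoment_zero hs ▸ (Gamma_pos_of_pos hs).ne'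
  rw [trigamma, hderiv.deriv_eq,
    ((hasDerivAt_gammaLogMoment 1 hs).fun_div (hasDerivAt_gammaLogMoment 0 hs) hΓ).deriv,
    gammaLogMoment_zero hs]
  field_simp

section CompInv

variable {E : Type*} [NormedAddCommGroup E] [NormedSpace ℝ E]

lemma abs_neg_one_mul_rpow_smul_comp_rpow_neg_one (G : ℝ → E) {x : ℝ} (hx : 0 < x) :
    (|(-1 : ℝ)| * x ^ ((-1 : ℝ) - 1)) • G (x ^ (-1 : ℝ)) = (x ^ 2)⁻¹ • G x⁻¹ := by
  rw [abs_neg, abs_one, one_mul, rpow_neg_one, show (-1 : ℝ) - 1 = -(2 : ℕ) by norm_num,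
    rpow_neg hx.le, rpow_natCast]

lemma integral_comp_inv_Ioi (G : ℝ → E) :
    ∫ x in Ioi 0, (x ^ 2)⁻¹ • G x⁻¹ = ∫ y in Ioi 0, G y := by
  rw [← integral_comp_rpow_Ioi G (p := -1) (by norm_num)]
  exact setIntegral_congr_fun measurableSet_Ioi fun x hx =>
    (abs_neg_one_mul_rpow_smul_comp_rpow_neg_one G hx).symm

lemma integrableOn_comp_inv_Ioi_iff (G : ℝ → E) :
    IntegrableOn (fun x => (x ^ 2)⁻¹ • G x⁻¹) (Ioi 0) ↔ IntegrableOn G (Ioi 0) := by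
  rw [← integrableOn_Ioi_comp_rpow_iff G (p := -1) (by norm_num)]
  exact integrableOn_congr_fun (fun x hx =>
    (abs_neg_one_mul_rpow_smul_comp_rpow_neg_one G hx).symm) measurableSet_Ioi

end CompInv

lemma mul_invGammaPdf_eq_comp_inv (θ : ℝ) (g : ℝ → ℝ) {x : ℝ} (hx : 0 < x) :
    g x * invGammaPdf θ x =
      (Gamma θ)⁻¹ * ((x ^ 2)⁻¹ * (x⁻¹ ^ (θ - 1) * (g x⁻¹⁻¹ * exp (-x⁻¹)))) := by
  have hpow : (x ^ 2)⁻¹ * x⁻¹ ^ (θ - 1) = x ^ (-θ - 1) := by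
    rw [inv_rpow hx.le, ← rpow_neg hx.le, ← rpow_natCast, ← rpow_neg hx.le, ← rpow_add hx]
    ring_nf
  rw [invGammaPdf, if_pos hx, inv_inv, ← hpow, neg_div, one_div]
  ring

lemma invGammaPdf_of_nonpos (θ : ℝ) {x : ℝ} (hx : x ≤ 0) : invGammaPdf θ x = 0 :=
  if_neg hx.not_gt

lemma integral_mul_invGammaPdf (θ : ℝ) (g : ℝ → ℝ) :
    ∫ x, g x * invGammaPdf θ x =
      (Gamma θ)⁻¹ * ∫ y in Ioi 0, y ^ (θ - 1) * (g y⁻¹ * exp (-y)) := by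
  have hoff : ∀ x ∉ Ioi (0 : ℝ), g x * invGammaPdf θ x = 0 := fun x hx => by
    rw [invGammaPdf_of_nonpos θ (not_lt.1 hx), mul_zero]
  rw [← setIntegral_eq_integral_of_forall_compl_eq_zero hoff,
    setIntegral_congr_fun measurableSet_Ioi fun x hx => mul_invGammaPdf_eq_comp_inv θ g hx,
    integral_const_mul]
  exact congrArg _ (integral_comp_inv_Ioi fun y => y ^ (θ - 1) * (g y⁻¹ * exp (-y)))

lemma integrable_mul_invGammaPdf (θ : ℝ) {g : ℝ → ℝ}
    (hg : IntegrableOn (fun y => y ^ (θ - 1) * (g y⁻¹ * exp (-y))) (Ioi 0)) :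
    Integrable (fun x => g x * invGammaPdf θ x) := by
  have hsupp : Function.support (fun x => g x * invGammaPdf θ x) ⊆ Ioi 0 := fun x hx => by
    by_contra hx0
    exact hx (by simp only [invGammaPdf_of_nonpos θ (not_lt.1 hx0), mul_zero])
  rw [← integrableOn_iff_integrable_of_support_subset hsupp]
  exact IntegrableOn.congr_fun (((integrableOn_comp_inv_Ioi_iff _).2 hg).const_mul (Gamma θ)⁻¹)
    (fun x hx => (mul_invGammaPdf_eq_comp_inv θ g hx).symm) measurableSet_Ioi

lemma measurable_invGammaPdf (θ : ℝ) : Measurable (invGammaPdf θ) :=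
  Measurable.ite measurableSet_Ioi (by fun_prop) measurable_const

lemma invGammaPdf_nonneg {θ : ℝ} (hθ : 0 < θ) (x : ℝ) : 0 ≤ invGammaPdf θ x := by
  unfold invGammaPdf
  split_ifs
  · have := Gamma_pos_of_pos hθ
    positivity
  · exact le_rfl

lemma integral_invGammaMeasure {θ : ℝ} (hθ : 0 < θ) (g : ℝ → ℝ) :
    ∫ x, g x ∂invGammaMeasure θ = ∫ x, g x * invGammaPdf θ x := by
  rw [invGammaMeasure, integral_withDensity_eq_integral_toReal_smul
    (measurable_invGammaPdf θ).ennreal_ofReal (ae_of_all _ fun _ => ENNReal.ofReal_lt_top)]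
  simp_rw [ENNReal.toReal_ofReal (invGammaPdf_nonneg hθ _), smul_eq_mul, mul_comm]

lemma integrable_invGammaMeasure_iff {θ : ℝ} (hθ : 0 < θ) {g : ℝ → ℝ} :
    Integrable g (invGammaMeasure θ) ↔ Integrable (fun x => g x * invGammaPdf θ x) := by
  rw [invGammaMeasure, integrable_withDensity_iff_integrable_smul'
    (measurable_invGammaPdf θ).ennreal_ofReal (ae_of_all _ fun _ => ENNReal.ofReal_lt_top)]
  simp_rw [ENNReal.toReal_ofReal (invGammaPdf_nonneg hθ _), smul_eq_mul, mul_comm]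

lemma log_inv_pow (k : ℕ) (y : ℝ) : log y⁻¹ ^ k = (-1) ^ k * log y ^ k := by
  rw [log_inv, neg_pow]

lemma integrable_log_pow_invGammaMeasure (k : ℕ) {θ : ℝ} (hθ : 0 < θ) :
    Integrable (fun x => log x ^ k) (invGammaMeasure θ) := by
  refine (integrable_invGammaMeasure_iff hθ).2 (integrable_mul_invGammaPdf θ ?_)
  exact IntegrableOn.congr_fun
    ((integrableOn_rpow_mul_log_pow_mul_exp_neg k hθ).const_mul ((-1) ^ k))
    (fun y _ => by rw [log_inv_pow]; ring) measurableSet_Ioi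

lemma integral_log_pow_invGammaMeasure (k : ℕ) {θ : ℝ} (hθ : 0 < θ) :
    ∫ x, log x ^ k ∂invGammaMeasure θ = (-1) ^ k * (gammaLogMoment k θ / Gamma θ) := by
  have hinv : ∫ y in Ioi 0, y ^ (θ - 1) * (log y⁻¹ ^ k * exp (-y)) =
      (-1) ^ k * gammaLogMoment k θ := by
    rw [gammaLogMoment, ← integral_const_mul]
    congr 1 with y
    rw [log_inv_pow]
    ring
  rw [integral_invGammaMeasure hθ, integral_mul_invGammaPdf, hinv]
  ring

/-- **Log-moments of an inverse-gamma random variable.** If `X ~ Gamma⁻¹(θ)` then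
`log X` is integrable and square-integrable, with `E[log X] = -ψ(θ)` and
`Var(log X) = ψ'(θ)`. -/
theorem invGamma_log_moments
    {Ω : Type*} [MeasurableSpace Ω] (P : Measure Ω) [IsProbabilityMeasure P]
    (θ : ℝ) (hθ : 0 < θ) (X : Ω → ℝ) (hX : Measurable X)
    (hlaw : Measure.map X P = invGammaMeasure θ) :
    Integrable (fun ω => Real.log (X ω)) P ∧
    MemLp (fun ω => Real.log (X ω)) 2 P ∧
    ∫ ω, Real.log (X ω) ∂P = -digamma θ ∧
    variance (fun ω => Real.log (X ω)) P = trigamma θ := by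
  have hmoment (k : ℕ) :
      ∫ ω, log (X ω) ^ k ∂P = (-1) ^ k * (gammaLogMoment k θ / Gamma θ) := by
    rw [← integral_log_pow_invGammaMeasure k hθ, ← hlaw,
      integral_map hX.aemeasurable (by fun_prop)]
  have hsq : Integrable (fun ω => log (X ω) ^ 2) P := by
    have h := integrable_log_pow_invGammaMeasure 2 hθ
    rwa [← hlaw, integrable_map_measure (by fun_prop) hX.aemeasurable] at h
  have hL2 : MemLp (fun ω => log (X ω)) 2 P :=
    (memLp_two_iff_integrable_sq (measurable_log.comp hX).aestronglyMeasurable).2 hsq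
  refine ⟨hL2.integrable one_le_two, hL2, ?_, ?_⟩
  · simpa [digamma_eq_gammaLogMoment_div hθ] using hmoment 1
  · have h1 := hmoment 1
    have h2 := hmoment 2
    simp only [pow_one] at h1
    rw [variance_eq_sub hL2, trigamma_eq_gammaLogMoment_div hθ]
    simp only [Pi.pow_apply, h1, h2]
    ring

end
end
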